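/- Let 0 → X → Y → Z → 0 be a short exact sequence of finitely generated R-modules. If X ∈ DF(R) and Z ∈ Deep(R), then Y ∈ DF(R). -/

import Mathlib

universe u

open IsLocalRing

noncomputable def rdepth (R : Type u) [CommRing R] [IsLocalRing R]
    (M : Type u) [AddCommGroup M] [Module R M] : ℕ :=
  sSup {n : ℕ | ∃ rs : List R, rs.length = n ∧ (∀ r ∈ rs, r ∈ maximalIdeal R) ∧
    RingTheory.Sequence.IsRegular M rs}

def Deep (R : Type u) [CommRing R] [IsLocalRing R]
    (M : Type u) [AddCommGroup M] [Module R M] : Prop :=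
  Module.Finite R M ∧ rdepth R R ≤ rdepth R M

def OmegaDeep (R : Type u) [CommRing R] [IsLocalRing R]
    (M : Type u) [AddCommGroup M] [Module R M] : Prop :=
  ∃ (n : ℕ) (f : M →ₗ[R] (Fin n → R)), Function.Injective f ∧
    Deep R ((Fin n → R) ⧸ LinearMap.range f)

def DF (R : Type u) [CommRing R] [IsLocalRing R]
    (M : Type u) [AddCommGroup M] [Module R M] : Prop :=
  ∃ (n : ℕ) (f : R →ₗ[R] (Fin n → M)), Function.Injective f ∧
    Deep R ((Fin n → M) ⧸ LinearMap.range f)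

def HasFreeSummand (R : Type u) [CommRing R] (M : Type u) [AddCommGroup M] [Module R M] : Prop :=
  ∃ (p : M →ₗ[R] R) (s : R →ₗ[R] M), p.comp s = LinearMap.id

noncomputable def mu (R : Type u) [CommRing R] (M : Type u) [AddCommGroup M] [Module R M] : ℕ :=
  sInf {n : ℕ | ∃ s : Fin n → M, Submodule.span R (Set.range s) = ⊤}

abbrev ExtVanishes (R : Type u) [CommRing R] (M N : Type u) [AddCommGroup M] [Module R M]
    [AddCommGroup N] [Module R N] (i : ℕ) : Prop :=
  Subsingleton (((Ext R (ModuleCat.{u} R) i).obj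
    (Opposite.op (ModuleCat.of R M))).obj (ModuleCat.of R N))

/-!
Pushing `0 → X → Y → Z → 0` to `n` copies and dividing by the image of `R` gives a short exact
sequence `0 → Xⁿ/R → Yⁿ/R → Zⁿ → 0`, so the claim is the depth lemma
`depth B ≥ min (depth A) (depth C)` for `0 → A → B → C → 0`. By Rees' theorem, `t ≤ depth M` iff
`Ext^i(k, M) = 0` for `i < t`, and in this form the depth lemma is the long exact `Ext` sequence.
The supremum defining `rdepth` is attained because regular sequences have length at most `dim R`.
-/
open RingTheory.Sequence CategoryTheory

namespace CategoryTheory.Abelian.Ext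

variable {C : Type*} [Category C] [Abelian C] [HasExt C]

theorem subsingleton_of_isZero {X Y : C} (hY : Limits.IsZero Y) (n : ℕ) :
    Subsingleton (Ext X Y n) :=
  subsingleton_of_forall_eq 0 fun e => by
    rw [← comp_mk₀_id e, hY.eq_of_src (𝟙 Y) 0, mk₀_zero, comp_zero]

theorem subsingleton_of_shortExact {S : ShortComplex C} (hS : S.ShortExact) (X : C) {n : ℕ}
    (h₁ : Subsingleton (Ext X S.X₁ n)) (h₃ : Subsingleton (Ext X S.X₃ n)) :
    Subsingleton (Ext X S.X₂ n) :=
  subsingleton_of_forall_eq 0 fun e => by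
    obtain ⟨e₁, rfl⟩ := covariant_sequence_exact₂ X hS e (Subsingleton.elim _ _)
    rw [Subsingleton.elim e₁ 0, zero_comp]

end CategoryTheory.Abelian.Ext

section LinearExact

variable {R : Type*} [Ring R] {X Y Z : Type*} [AddCommGroup X] [Module R X]
  [AddCommGroup Y] [Module R Y] [AddCommGroup Z] [Module R Z] {f : X →ₗ[R] Y} {g : Y →ₗ[R] Z}

theorem Submodule.injective_mapQ_map (hf : Function.Injective f) (N : Submodule R X) :
    Function.Injective (N.mapQ (N.map f) f (N.le_comap_map f)) :=
  LinearMap.ker_eq_bot.mp <| by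
    rw [Submodule.ker_mapQ, Submodule.comap_map_eq_of_injective hf, Submodule.mkQ_map_self]

theorem Submodule.surjective_liftQ (hg : Function.Surjective g) (N : Submodule R Y)
    (hN : N ≤ LinearMap.ker g) : Function.Surjective (N.liftQ g hN) :=
  LinearMap.range_eq_top.mp <| by rw [Submodule.range_liftQ, LinearMap.range_eq_top.mpr hg]

theorem Function.Exact.map_le_ker (hfg : Function.Exact f g) (N : Submodule R X) :
    N.map f ≤ LinearMap.ker g :=
  hfg.linearMap_ker_eq ▸ LinearMap.map_le_range

theorem Function.Exact.mapQ_liftQ (hfg : Function.Exact f g) (N : Submodule R X) :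
    Function.Exact (N.mapQ (N.map f) f (N.le_comap_map f))
      ((N.map f).liftQ g (hfg.map_le_ker N)) :=
  LinearMap.exact_iff.mpr <| by
    rw [Submodule.ker_liftQ, Submodule.range_mapQ, hfg.linearMap_ker_eq]

theorem Function.Exact.compLeft (hfg : Function.Exact f g) (ι : Type*) :
    Function.Exact (f.compLeft ι) (g.compLeft ι) := fun y => by
  simp only [funext_iff, LinearMap.compLeft_apply, Function.comp_apply, Pi.zero_apply, hfg _,
    Set.mem_range]
  exact Classical.skolem

end LinearExact

section ModuleCatExt

variable {R : Type u} [Ring R] {X Y Z : Type u} [AddCommGroup X] [Module R X]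
  [AddCommGroup Y] [Module R Y] [AddCommGroup Z] [Module R Z] {f : X →ₗ[R] Y} {g : Y →ₗ[R] Z}

theorem Function.Exact.subsingleton_ext (hfg : Function.Exact f g) (hf : Function.Injective f)
    (hg : Function.Surjective g) (W : ModuleCat.{u} R) {n : ℕ}
    (hX : Subsingleton (Abelian.Ext W (ModuleCat.of R X) n))
    (hZ : Subsingleton (Abelian.Ext W (ModuleCat.of R Z) n)) :
    Subsingleton (Abelian.Ext W (ModuleCat.of R Y) n) :=
  Abelian.Ext.subsingleton_of_shortExact
    (S := ShortComplex.moduleCatMk f g hfg.linearMap_comp_eq_zero)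
    { exact := (ShortComplex.ShortExact.moduleCat_exact_iff_function_exact _).mpr hfg
      mono_f := (ModuleCat.mono_iff_injective _).mpr hf
      epi_g := (ModuleCat.epi_iff_surjective _).mpr hg } W hX hZ

theorem subsingleton_ext_pi (W : ModuleCat.{u} R) {n : ℕ}
    (hZ : Subsingleton (Abelian.Ext W (ModuleCat.of R Z) n)) :
    ∀ m : ℕ, Subsingleton (Abelian.Ext W (ModuleCat.of R (Fin m → Z)) n)
  | 0 => Abelian.Ext.subsingleton_of_isZero (ModuleCat.isZero_of_subsingleton _) n
  | m + 1 => by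
    let e : (Z × (Fin m → Z)) ≃ₗ[R] (Fin (m + 1) → Z) := Fin.consLinearEquiv R (fun _ => Z)
    have hexact := (LinearEquiv.conj_exact_iff_exact (LinearMap.inl R Z (Fin m → Z))
      (LinearMap.snd R Z (Fin m → Z)) e).mpr Function.Exact.inl_snd
    exact hexact.subsingleton_ext (e.injective.comp (LinearMap.inl_injective (R := R)))
      ((LinearMap.snd_surjective (R := R)).comp e.symm.surjective) W hZ
      (subsingleton_ext_pi W hZ m)

end ModuleCatExt

section Depth

variable {R : Type u} [CommRing R] [IsLocalRing R] {M : Type u} [AddCommGroup M] [Module R M]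

theorem nontrivial_of_rdepth_ne_zero (h : rdepth R M ≠ 0) : Nontrivial M := by
  by_contra hM
  refine h ?_
  have : {n : ℕ | ∃ rs : List R, rs.length = n ∧ (∀ r ∈ rs, r ∈ maximalIdeal R) ∧
      IsRegular M rs} = ∅ :=
    Set.eq_empty_of_forall_notMem fun _ ⟨_, _, _, hrs⟩ => hM hrs.nontrivial
  rw [rdepth, this, csSup_empty, bot_eq_zero]

variable [IsNoetherianRing R] [Module.Finite R M]

theorem RingTheory.Sequence.IsRegular.length_le_ringKrullDim {rs : List R}
    (h : IsRegular M rs) : (rs.length : WithBot ℕ∞) ≤ ringKrullDim R := by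
  have : Nontrivial (M ⧸ Ideal.ofList rs • (⊤ : Submodule R M)) :=
    Submodule.Quotient.nontrivial_iff.mpr h.top_ne_smul.symm
  calc (rs.length : WithBot ℕ∞)
      ≤ Module.supportDim R (M ⧸ Ideal.ofList rs • (⊤ : Submodule R M)) + rs.length :=
        le_add_of_nonneg_left ?_
    _ = Module.supportDim R M := Module.supportDim_add_length_eq_supportDim_of_isRegular rs h
    _ ≤ ringKrullDim R := Module.supportDim_le_ringKrullDim R M
  obtain ⟨a, ha⟩ := WithBot.ne_bot_iff_exists.mp
    ((Module.supportDim_ne_bot_iff_nontrivial R _).mpr ‹_›)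
  exact ha ▸ WithBot.coe_le_coe.mpr bot_le

theorem bddAbove_length_isRegular :
    BddAbove {n : ℕ | ∃ rs : List R, rs.length = n ∧ (∀ r ∈ rs, r ∈ maximalIdeal R) ∧
      IsRegular M rs} := by
  obtain ⟨d, hd⟩ : ∃ d : ℕ, ringKrullDim R = d := by
    obtain ⟨a, ha⟩ := WithBot.ne_bot_iff_exists.mp (ringKrullDim_ne_bot (R := R))
    obtain ⟨d, rfl⟩ := WithTop.ne_top_iff_exists.mp
      (show a ≠ ⊤ by rintro rfl; exact ringKrullDim_ne_top ha.symm)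
    exact ⟨d, ha.symm⟩
  refine ⟨d, ?_⟩
  rintro _ ⟨rs, rfl, -, h⟩
  have := h.length_le_ringKrullDim
  rw [hd] at this
  exact_mod_cast this

/-- The residue field in the form in which Mathlib's Rees theorem is stated. -/
noncomputable abbrev residueModule (R : Type u) [CommRing R] [IsLocalRing R] : ModuleCat.{u} R :=
  ModuleCat.of R (Shrink.{u} (R ⧸ maximalIdeal R))

theorem exists_isRegular_iff_subsingleton_ext [Nontrivial M] (n : ℕ) :
    (∃ rs : List R, rs.length = n ∧ (∀ r ∈ rs, r ∈ maximalIdeal R) ∧ IsRegular M rs) ↔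
      ∀ i < n, Subsingleton (Abelian.Ext (residueModule R) (ModuleCat.of R M) i) :=
  (ModuleCat.exists_isRegular_tfae _ n (ModuleCat.of R M)
    (Submodule.top_ne_ideal_smul_of_le_jacobson_annihilator
      (maximalIdeal_le_jacobson _)).symm.lt_top).out 3 1

theorem subsingleton_ext_of_lt_rdepth {i : ℕ} (hi : i < rdepth R M) :
    Subsingleton (Abelian.Ext (residueModule R) (ModuleCat.of R M) i) := by
  have := nontrivial_of_rdepth_ne_zero (R := R) (M := M) (by omega)
  have hbdd := bddAbove_length_isRegular (R := R) (M := M)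
  exact (exists_isRegular_iff_subsingleton_ext _).mp
    (Nat.sSup_mem ⟨0, by exact ⟨[], rfl, by simp, IsRegular.nil R M⟩⟩ hbdd) i hi

theorem le_rdepth_of_subsingleton_ext [Nontrivial M] {n : ℕ}
    (h : ∀ i < n, Subsingleton (Abelian.Ext (residueModule R) (ModuleCat.of R M) i)) :
    n ≤ rdepth R M :=
  le_csSup bddAbove_length_isRegular ((exists_isRegular_iff_subsingleton_ext n).mpr h)

variable {X Y Z : Type u} [AddCommGroup X] [Module R X] [Module.Finite R X]
  [AddCommGroup Y] [Module R Y] [Module.Finite R Y] [AddCommGroup Z] [Module R Z]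
  [Module.Finite R Z] {f : X →ₗ[R] Y} {g : Y →ₗ[R] Z} {n : ℕ}

theorem Function.Exact.le_rdepth (hfg : Function.Exact f g) (hf : Function.Injective f)
    (hg : Function.Surjective g) (hX : n ≤ rdepth R X) (hZ : n ≤ rdepth R Z) :
    n ≤ rdepth R Y := by
  rcases Nat.eq_zero_or_pos n with rfl | hn
  · exact Nat.zero_le _
  have := nontrivial_of_rdepth_ne_zero (R := R) (M := X) (by omega)
  have := hf.nontrivial
  exact le_rdepth_of_subsingleton_ext fun i hi => hfg.subsingleton_ext hf hg _
    (subsingleton_ext_of_lt_rdepth (by omega)) (subsingleton_ext_of_lt_rdepth (by omega))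

theorem le_rdepth_pi (hZ : n ≤ rdepth R Z) (m : ℕ) [NeZero m] : n ≤ rdepth R (Fin m → Z) := by
  rcases Nat.eq_zero_or_pos n with rfl | hn
  · exact Nat.zero_le _
  have := nontrivial_of_rdepth_ne_zero (R := R) (M := Z) (by omega)
  exact le_rdepth_of_subsingleton_ext fun i hi =>
    subsingleton_ext_pi _ (subsingleton_ext_of_lt_rdepth (by omega)) m

end Depth

/-- Given a short exact sequence `0 → X → Y → Z → 0` of finitely generated
modules over a Noetherian local ring, if `X ∈ DF(R)` and `Z ∈ Deep(R)` then `Y ∈ DF(R)`. -/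
theorem stmt_2 (R : Type u) [CommRing R] [IsNoetherianRing R] [IsLocalRing R]
    (X Y Z : Type u) [AddCommGroup X] [Module R X] [Module.Finite R X]
    [AddCommGroup Y] [Module R Y] [Module.Finite R Y]
    [AddCommGroup Z] [Module R Z] [Module.Finite R Z]
    (f : X →ₗ[R] Y) (g : Y →ₗ[R] Z)
    (hf : Function.Injective f) (hg : Function.Surjective g)
    (hfg : LinearMap.range f = LinearMap.ker g)
    (hX : DF R X) (hZ : Deep R Z) :
    DF R Y := by
  obtain ⟨n, ι, hι, -, hdeep⟩ := hX
  have : NeZero n := ⟨by rintro rfl; exact one_ne_zero (hι (Subsingleton.elim _ _))⟩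
  have hfgn := (LinearMap.exact_iff.mpr hfg.symm).compLeft (Fin n)
  have hfn : Function.Injective (f.compLeft (Fin n)) := hf.comp_left
  refine ⟨n, f.compLeft (Fin n) ∘ₗ ι, hfn.comp hι, inferInstance, ?_⟩
  rw [LinearMap.range_comp]
  exact (hfgn.mapQ_liftQ _).le_rdepth (Submodule.injective_mapQ_map hfn _)
    (Submodule.surjective_liftQ (hg.comp_left (α := Fin n)) _ _) hdeep (le_rdepth_pi hZ.2 n)
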